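/- Let p be a prime, α > β ≥ γ > σ ≥ 0 with α − β = γ − σ, and let G = ⟨a, b ∣ [a,b]^{p^γ} = a^{p^α} = [a,b,b] = [a,b,a] = 1, b^{p^β} = [a,b]^{p^σ}⟩. Let k be an integer with 0 ≤ k < α − β and let i', j' be integers coprime to p. Then the element d = a^{i' p^{β+k}} b^{j' p^{β+k}} is central in G and has order p^{α−β−k}. -/
import Mathlib


/-- The commutator `[x,y] = x⁻¹y⁻¹xy`. -/
def gcomm {G : Type*} [Group G] (x y : G) : G := x⁻¹ * y⁻¹ * x * y

/-- The free generators `a`, `b` of the free group on two generators. -/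
def aF : FreeGroup Bool := FreeGroup.of true
def bF : FreeGroup Bool := FreeGroup.of false

/-- Relators of `G = ⟨a,b ∣ [a,b]^{p^γ} = a^{p^α} = [a,b,b] = [a,b,a] = 1,
b^{p^β} = [a,b]^{p^σ}⟩-/
def rels7 (p α β γ σ : ℕ) : Set (FreeGroup Bool) :=
  {gcomm aF bF ^ p ^ γ, aF ^ p ^ α, gcomm (gcomm aF bF) bF, gcomm (gcomm aF bF) aF,
    bF ^ p ^ β * (gcomm aF bF ^ p ^ σ)⁻¹}

lemma gcomm_eq_one_iff {G : Type*} [Group G] (x y : G) : gcomm x y = 1 ↔ Commute x y := by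
  rw [gcomm, show x⁻¹ * y⁻¹ * x * y = (y * x)⁻¹ * (x * y) by group, inv_mul_eq_one, eq_comm]
  exact Iff.rfl

lemma map_gcomm {G H : Type*} [Group G] [Group H] (φ : G →* H) (x y : G) :
    φ (gcomm x y) = gcomm (φ x) (φ y) := by simp [gcomm]

theorem stmt7 (p α β γ σ : ℕ) (hp : p.Prime) (h1 : β < α) (h2 : γ ≤ β) (h3 : σ < γ)
    (h4 : α - β = γ - σ) (k : ℕ) (hk : k < α - β) (i' j' : ℤ)
    (hi : IsCoprime i' (p : ℤ)) (hj : IsCoprime j' (p : ℤ)) :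
    ((PresentedGroup.of true : PresentedGroup (rels7 p α β γ σ)) ^ (i' * (p : ℤ) ^ (β + k)) *
        (PresentedGroup.of false : PresentedGroup (rels7 p α β γ σ)) ^ (j' * (p : ℤ) ^ (β + k)))
        ∈ Subgroup.center (PresentedGroup (rels7 p α β γ σ)) ∧
      orderOf ((PresentedGroup.of true : PresentedGroup (rels7 p α β γ σ)) ^ (i' * (p : ℤ) ^ (β + k)) *
        (PresentedGroup.of false : PresentedGroup (rels7 p α β γ σ)) ^ (j' * (p : ℤ) ^ (β + k)))
        = p ^ (α - β - k) := by
  set R := rels7 p α β γ σ with hR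
  set A : PresentedGroup R := PresentedGroup.of true with hA
  set B : PresentedGroup R := PresentedGroup.of false with hB
  -- the relations hold in the presented group
  have hone : ∀ r ∈ R, PresentedGroup.mk R r = 1 := fun r hr =>
    (QuotientGroup.eq_one_iff r).2 (Subgroup.subset_normalClosure hr)
  have hmkA : PresentedGroup.mk R aF = A := rfl
  have hmkB : PresentedGroup.mk R bF = B := rfl
  have r1 : gcomm A B ^ p ^ γ = 1 := by
    have := hone _ (show gcomm aF bF ^ p ^ γ ∈ R from Set.mem_insert _ _)
    rwa [map_pow, map_gcomm, hmkA, hmkB] at this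
  have r2 : A ^ p ^ α = 1 := by
    have := hone _ (show aF ^ p ^ α ∈ R from
      Set.mem_insert_of_mem _ (Set.mem_insert _ _))
    rwa [map_pow, hmkA] at this
  have r3 : gcomm (gcomm A B) B = 1 := by
    have := hone _ (show gcomm (gcomm aF bF) bF ∈ R from
      Set.mem_insert_of_mem _ (Set.mem_insert_of_mem _ (Set.mem_insert _ _)))
    rwa [map_gcomm, map_gcomm, hmkA, hmkB] at this
  have r4 : gcomm (gcomm A B) A = 1 := by
    have := hone _ (show gcomm (gcomm aF bF) aF ∈ R from
      Set.mem_insert_of_mem _ (Set.mem_insert_of_mem _ (Set.mem_insert_of_mem _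
        (Set.mem_insert _ _))))
    rwa [map_gcomm, map_gcomm, hmkA, hmkB] at this
  have r5 : B ^ p ^ β = gcomm A B ^ p ^ σ := by
    have := hone _ (show bF ^ p ^ β * (gcomm aF bF ^ p ^ σ)⁻¹ ∈ R from
      Set.mem_insert_of_mem _ (Set.mem_insert_of_mem _ (Set.mem_insert_of_mem _
        (Set.mem_insert_of_mem _ rfl))))
    rw [map_mul, map_inv, map_pow, map_pow, map_gcomm, hmkA, hmkB, mul_inv_eq_one] at this
    exact this
  set c : PresentedGroup R := gcomm A B with hc
  have hca : Commute c A := (gcomm_eq_one_iff _ _).1 r4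
  have hcb : Commute c B := (gcomm_eq_one_iff _ _).1 r3
  set N : ℕ := p ^ (β + k) with hN
  have hcN : c ^ N = 1 := by
    have hβk : β + k = γ + (β + k - γ) := by omega
    rw [hN, hβk, pow_add, pow_mul, r1, one_pow]
  -- conjugation formulas
  have hsemiA : SemiconjBy B⁻¹ A (A * c) := by
    show B⁻¹ * A = A * c * B⁻¹
    rw [hc, gcomm]; group
  have hsemiB : SemiconjBy A⁻¹ B (B * c⁻¹) := by
    show A⁻¹ * B = B * c⁻¹ * A⁻¹
    rw [hc, gcomm]; group
  have hAb : Commute (A ^ N) B := by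
    have h := hsemiA.pow_right N
    rw [hca.symm.mul_pow, hcN, mul_one] at h
    exact (Commute.inv_left_iff.mp h).symm
  have hBa : Commute (B ^ N) A := by
    have h := hsemiB.pow_right N
    rw [hcb.symm.inv_right.mul_pow, inv_pow, hcN, inv_one, mul_one] at h
    exact (Commute.inv_left_iff.mp h).symm
  set X : PresentedGroup R := A ^ N with hX
  set Y : PresentedGroup R := B ^ N with hY
  have hXa : Commute X A := (Commute.refl A).pow_left N
  have hYb : Commute Y B := (Commute.refl B).pow_left N
  have hXY : Commute X Y := hAb.pow_right N
  have hcast : i' * (p : ℤ) ^ (β + k) = (N : ℤ) * i' := by rw [hN]; push_cast; ring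
  have hcast' : j' * (p : ℤ) ^ (β + k) = (N : ℤ) * j' := by rw [hN]; push_cast; ring
  have hdA : A ^ (i' * (p : ℤ) ^ (β + k)) = X ^ i' := by
    rw [hcast, zpow_mul, zpow_natCast]
  have hdB : B ^ (j' * (p : ℤ) ^ (β + k)) = Y ^ j' := by
    rw [hcast', zpow_mul, zpow_natCast]
  set d : PresentedGroup R := A ^ (i' * (p : ℤ) ^ (β + k)) * B ^ (j' * (p : ℤ) ^ (β + k))
    with hd
  have hd' : d = X ^ i' * Y ^ j' := by rw [hd, hdA, hdB]
  -- d commutes with the generators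
  have hdcommA : Commute d A := by
    rw [hd']
    exact Commute.mul_left (hXa.zpow_left i') (hBa.zpow_left j')
  have hdcommB : Commute d B := by
    rw [hd']
    exact Commute.mul_left (hAb.zpow_left i') (hYb.zpow_left j')
  -- centrality
  have hcenter : d ∈ Subgroup.center (PresentedGroup R) := by
    rw [Subgroup.mem_center_iff]
    intro g
    have hg : g ∈ Subgroup.centralizer {d} := by
      refine PresentedGroup.generated_by R _ (fun j => ?_) g
      rw [Subgroup.mem_centralizer_iff]
      intro h hh
      rw [Set.mem_singleton_iff] at hh
      subst hh
      cases j
      · exact hdcommB.eq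
      · exact hdcommA.eq
    rw [Subgroup.mem_centralizer_iff] at hg
    exact (hg d (Set.mem_singleton d)).symm
  refine ⟨hcenter, ?_⟩
  -- upper bound: d ^ (p ^ (α - β - k)) = 1
  set m : ℕ := p ^ (α - β - k) with hm
  have hXm : X ^ m = 1 := by
    rw [hX, ← pow_mul, hN, hm, ← pow_add, show β + k + (α - β - k) = α by omega, r2]
  have hYm : Y ^ m = 1 := by
    rw [hY, ← pow_mul, hN, hm, ← pow_add, show β + k + (α - β - k) = β + (α - β) by omega,
      pow_add, pow_mul, r5, ← pow_mul, ← pow_add, show σ + (α - β) = γ by omega, r1]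
  have hdm : d ^ m = 1 := by
    rw [hd', ((hXY.zpow_left i').zpow_right j').mul_pow, ← zpow_natCast (X ^ i'),
      ← zpow_mul, mul_comm i', zpow_mul, zpow_natCast, hXm, one_zpow,
      ← zpow_natCast (Y ^ j'), ← zpow_mul, mul_comm j', zpow_mul, zpow_natCast, hYm,
      one_zpow, one_mul]
  -- lower bound via the abelianization hom to ZMod (p ^ α)
  haveI : NeZero (p ^ α) := ⟨pow_ne_zero _ hp.ne_zero⟩
  set f : Bool → Multiplicative (ZMod (p ^ α)) :=
    fun x => Multiplicative.ofAdd (if x then (1 : ZMod (p ^ α)) else 0) with hf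
  have hrel : ∀ r ∈ R, FreeGroup.lift f r = 1 := by
    intro r hr
    have hpow : (Multiplicative.ofAdd (1 : ZMod (p ^ α))) ^ (p ^ α) = 1 := by
      rw [← ofAdd_nsmul, nsmul_eq_mul, mul_one, ZMod.natCast_self, ofAdd_zero]
    rw [hR, rels7] at hr
    simp only [Set.mem_insert_iff, Set.mem_singleton_iff] at hr
    rcases hr with rfl | rfl | rfl | rfl | rfl
    · rw [map_pow, map_gcomm, (gcomm_eq_one_iff _ _).2 (Commute.all _ _), one_pow]
    · rw [map_pow]
      simp only [aF, FreeGroup.lift_apply_of, hf, if_pos]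
      exact hpow
    · rw [map_gcomm, (gcomm_eq_one_iff _ _).2 (Commute.all _ _)]
    · rw [map_gcomm, (gcomm_eq_one_iff _ _).2 (Commute.all _ _)]
    · rw [map_mul, map_inv, map_pow, map_pow, map_gcomm,
        (gcomm_eq_one_iff _ _).2 (Commute.all _ _), one_pow, inv_one, mul_one]
      simp [bF, hf]
  set φ := PresentedGroup.toGroup hrel with hφ
  have hφA : φ A = Multiplicative.ofAdd (1 : ZMod (p ^ α)) := by
    have : φ A = f true := PresentedGroup.toGroup.of hrel
    rw [this]; simp [hf]
  have hφB : φ B = 1 := by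
    have : φ B = f false := PresentedGroup.toGroup.of hrel
    rw [this]; simp [hf]
  have hord : φ d ^ (orderOf d) = 1 := by rw [← map_pow, pow_orderOf_eq_one, map_one]
  rw [hd, map_mul, map_zpow, map_zpow, hφA, hφB, one_zpow, mul_one, ← zpow_natCast,
    ← zpow_mul, ← ofAdd_zsmul, zsmul_eq_mul, mul_one, ofAdd_eq_one] at hord
  have hdvd : ((p : ℤ) ^ α) ∣ i' * (p : ℤ) ^ (β + k) * (orderOf d : ℤ) := by
    have h := (ZMod.intCast_zmod_eq_zero_iff_dvd _ (p ^ α)).1 (by exact_mod_cast hord)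
    push_cast at h
    convert h using 1
  have hdvd2 : (p : ℤ) ^ (α - β - k) ∣ i' * (orderOf d : ℤ) := by
    have hne : ((p : ℤ) ^ (β + k)) ≠ 0 :=
      pow_ne_zero _ (by exact_mod_cast hp.ne_zero)
    refine (mul_dvd_mul_iff_left hne).mp ?_
    have e1 : (p : ℤ) ^ (β + k) * (p : ℤ) ^ (α - β - k) = (p : ℤ) ^ α := by
      rw [← pow_add, show β + k + (α - β - k) = α by omega]
    have e2 : (p : ℤ) ^ (β + k) * (i' * (orderOf d : ℤ))
        = i' * (p : ℤ) ^ (β + k) * (orderOf d : ℤ) := by ring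
    rw [e1, e2]
    exact hdvd
  have hcop : IsCoprime ((p : ℤ) ^ (α - β - k)) i' := hi.symm.pow_left
  have hdvd3 : (p : ℤ) ^ (α - β - k) ∣ (orderOf d : ℤ) :=
    hcop.dvd_of_dvd_mul_left hdvd2
  have hdvdN : p ^ (α - β - k) ∣ orderOf d := by
    rwa [show ((p : ℤ)) ^ (α - β - k) = ((p ^ (α - β - k) : ℕ) : ℤ) by push_cast; ring,
      Int.natCast_dvd_natCast] at hdvd3
  exact Nat.dvd_antisymm (orderOf_dvd_of_pow_eq_one hdm) hdvdN
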